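/- arXiv:1902.09748 — 2 statements merged into one kernel-verified Lean document; each statement's English description precedes it below -/
import Mathlib

section
/- Let 1 ≤ k < l ≤ n with l − k + 1 ≥ m, and let f_1 > f_2 > ⋯ > f_r be all diagonal monomials of Y_{kl}, ordered decreasingly by τ. Fix 1 ≤ u ≤ r−1, write f_{u+1} = X_{1c_1}X_{2c_2}⋯X_{mc_m} (so k ≤ c_1 < ⋯ < c_m ≤ l) and set c_0 = k−1. Then the colon ideal (⟨f_1,…,f_u⟩ : f_{u+1}) in K[X] equals the ideal generated by the variables X_{ib} with 1 ≤ i ≤ m and c_{i−1} < b < c_i. In particular, every such colon ideal is generated by variables, so the ideal J_{kl} has linear quotients with respect to this ordering of its generators. -/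
/-! On diagonal monomials, τ is the reverse lexicographic order of column sequences: `a` beats
`c` iff `a i < c i` at the first row `i` where they differ. Both ideals are monomial, so it is
enough to compare exponents `e`. If `x^e · f_{u+1}` is divisible by a larger diagonal monomial
`x^a`, then `x^e` contains `X_{i a_i}` for that first row `i`, and `c_{i-1} = a_{i-1} < a_i < c_i`
(for `i = 1` because `c_0 = k - 1 < a_1`).
Conversely, for a gap variable `X_{ib}`, replacing `c_i` by `b` gives a larger diagonal monomial
dividing `X_{ib} · f_{u+1}`. -/

open MvPolynomial

/-- The exponent vector of the diagonal monomial with column sequence `c`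
(rows `1,…,m`, row `i` contributing the variable `X (i, c i)`). -/
noncomputable def expVec (m : ℕ) (c : ℕ → ℕ) : (ℕ × ℕ) →₀ ℕ :=
  ∑ i ∈ Finset.Icc 1 m, Finsupp.single (i, c i) 1

/-- The diagonal monomial `X_{1 c₁} X_{2 c₂} ⋯ X_{m c_m}`. -/
noncomputable def diagMon (K : Type*) [Field K] (m : ℕ) (c : ℕ → ℕ) :
    MvPolynomial (ℕ × ℕ) K :=
  ∏ i ∈ Finset.Icc 1 m, MvPolynomial.X (i, c i)

/-- `tauGt a b` : the monomial with exponent vector `a` is strictly larger than the one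
with exponent vector `b` in the lexicographic monomial order τ induced by
`X 11 > X 12 > ⋯ > X 1n > X 21 > ⋯ > X mn` : at the most significant variable where
they differ (i.e. the lexicographically smallest index pair), `a` has the bigger exponent. -/
def tauGt (a b : (ℕ × ℕ) →₀ ℕ) : Prop :=
  ∃ p : ℕ × ℕ, b p < a p ∧
    ∀ q : ℕ × ℕ, (q.1 < p.1 ∨ (q.1 = p.1 ∧ q.2 < p.2)) → a q = b q

/-- `c` is the column sequence of a diagonal monomial of the submatrix `Y_{kl}`
(columns `k` through `l`): strictly increasing on `1,…,m` with values in `[k,l]`. -/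
def IsDiagSeq (m k l : ℕ) (c : ℕ → ℕ) : Prop :=
  (∀ i, 1 ≤ i → i < m → c i < c (i + 1)) ∧ k ≤ c 1 ∧ c m ≤ l

/-- The ideal `J_{kl}` of `K[X]` generated by all diagonal monomials of `Y_{kl}`. -/
noncomputable def Jkl (K : Type*) [Field K] (m k l : ℕ) : Ideal (MvPolynomial (ℕ × ℕ) K) :=
  Ideal.span {g | ∃ c, IsDiagSeq m k l c ∧ g = diagMon K m c}

lemma expVec_apply (m : ℕ) (c : ℕ → ℕ) (i b : ℕ) :
    expVec m c (i, b) = if 1 ≤ i ∧ i ≤ m ∧ c i = b then 1 else 0 := by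
  classical
  simp only [expVec, Finsupp.finsetSum_apply, Finsupp.single_apply, Prod.mk.injEq]
  by_cases hi : i ∈ Finset.Icc 1 m
  · rw [Finset.sum_eq_single i (by grind) (by grind)]
    grind
  · rw [Finset.sum_eq_zero (by grind)]
    grind

lemma diagMon_eq_monomial (K : Type*) [Field K] (m : ℕ) (c : ℕ → ℕ) :
    diagMon K m c = monomial (expVec m c) 1 := by
  rw [diagMon, expVec, monomial_sum_one]
  rfl

lemma MvPolynomial.mem_colon_span_monomial_iff {σ R : Type*} [CommSemiring R]
    {S : Set (σ →₀ ℕ)} {d : σ →₀ ℕ} {f : MvPolynomial σ R} :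
    f ∈ (Ideal.span ((fun s => monomial s (1 : R)) '' S)).colon
        (Ideal.span {monomial d (1 : R)}) ↔
      ∀ e ∈ f.support, ∃ s ∈ S, s ≤ e + d := by
  rw [Ideal.mem_colon_span_singleton, mem_ideal_span_monomial_image]
  constructor
  · intro h e he
    refine h _ ?_
    rwa [mem_support_iff, coeff_mul_monomial, mul_one, ← mem_support_iff]
  · intro h e' he'
    rw [mem_support_iff, coeff_mul_monomial'] at he'
    split_ifs at he' with hde
    · obtain ⟨s, hs, hle⟩ := h _ (mem_support_iff.mpr (by simpa using he'))
      exact ⟨s, hs, by rwa [tsub_add_cancel_of_le hde] at hle⟩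
    · exact absurd rfl he'

lemma tauGt_expVec_iff {m : ℕ} {a c : ℕ → ℕ} :
    tauGt (expVec m a) (expVec m c) ↔
      ∃ i, 1 ≤ i ∧ i ≤ m ∧ a i < c i ∧ ∀ j, 1 ≤ j → j < i → a j = c j := by
  constructor
  · rintro ⟨⟨i, b⟩, hlt, hagree⟩
    simp only [expVec_apply] at hlt
    have hai : 1 ≤ i ∧ i ≤ m ∧ a i = b := by by_contra h; simp [h] at hlt
    have hci : c i ≠ b := fun h => by simp [hai, h] at hlt
    refine ⟨i, hai.1, hai.2.1, ?_, fun j hj1 hji => ?_⟩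
    · by_contra! h
      have := hagree (i, c i) (Or.inr ⟨rfl, by omega⟩)
      simp only [expVec_apply] at this
      grind
    · have := hagree (j, a j) (Or.inl hji)
      simp only [expVec_apply] at this
      grind
  · rintro ⟨i, hi1, him, hlt, hagree⟩
    refine ⟨(i, a i), ?_, ?_⟩
    · simp only [expVec_apply]; grind
    · rintro ⟨j, b⟩ (hj | ⟨rfl, hb⟩)
      · simp only [expVec_apply]
        by_cases hj1 : 1 ≤ j
        · rw [hagree j hj1 hj]
        · simp [hj1]
      · simp only [expVec_apply]; grind

def diagGaps (m : ℕ) (c : ℕ → ℕ) : Set (ℕ × ℕ) :=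
  {q | 1 ≤ q.1 ∧ q.1 ≤ m ∧ c (q.1 - 1) < q.2 ∧ q.2 < c q.1}

section DiagSeq

variable {m k l i b : ℕ} {a c : ℕ → ℕ}

lemma exists_mem_diagGaps_of_tauGt (hk : 1 ≤ k) (hc0 : c 0 = k - 1) (ha : IsDiagSeq m k l a)
    (h : tauGt (expVec m a) (expVec m c)) : ∃ i, (i, a i) ∈ diagGaps m c := by
  obtain ⟨i, hi1, him, hlt, hagree⟩ := tauGt_expVec_iff.1 h
  refine ⟨i, hi1, him, ?_, hlt⟩
  obtain rfl | hi := eq_or_lt_of_le hi1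
  · have := ha.2.1
    simp only [Nat.sub_self, hc0]
    omega
  · have := ha.1 (i - 1) (by omega) (by omega)
    rw [Nat.sub_add_cancel hi1] at this
    rwa [← hagree (i - 1) (by omega) (by omega)]

lemma isDiagSeq_update (hc0 : c 0 = k - 1) (hc : IsDiagSeq m k l c)
    (hq : (i, b) ∈ diagGaps m c) : IsDiagSeq m k l (Function.update c i b) := by
  obtain ⟨hmono, hk, hl⟩ := hc
  obtain ⟨hi1, him, hlo, hhi⟩ := hq
  simp only at hi1 him hlo hhi
  refine ⟨fun j hj1 hjm => ?_, ?_, ?_⟩ <;> simp only [Function.update_apply]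
  · have := hmono j hj1 hjm
    grind
  · grind
  · grind

lemma tauGt_expVec_update (hq : (i, b) ∈ diagGaps m c) :
    tauGt (expVec m (Function.update c i b)) (expVec m c) :=
  tauGt_expVec_iff.2 ⟨i, hq.1, hq.2.1, by simpa using hq.2.2.2,
    fun _ _ hj => Function.update_of_ne hj.ne _ _⟩

lemma expVec_update_le {e : (ℕ × ℕ) →₀ ℕ} (he : e (i, b) ≠ 0) :
    expVec m (Function.update c i b) ≤ e + expVec m c := by
  rintro ⟨j, b'⟩
  simp only [Finsupp.add_apply, expVec_apply, Function.update_apply]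
  split_ifs <;> grind

theorem exists_tauGt_expVec_le_iff (hk : 1 ≤ k) (hc0 : c 0 = k - 1) (hc : IsDiagSeq m k l c)
    (e : (ℕ × ℕ) →₀ ℕ) :
    (∃ a, IsDiagSeq m k l a ∧ tauGt (expVec m a) (expVec m c) ∧
        expVec m a ≤ e + expVec m c) ↔
      ∃ q ∈ diagGaps m c, e q ≠ 0 := by
  constructor
  · rintro ⟨a, ha, hgt, hle⟩
    obtain ⟨i, hq⟩ := exists_mem_diagGaps_of_tauGt hk hc0 ha hgt
    refine ⟨_, hq, fun he => ?_⟩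
    have := hle (i, a i)
    simp only [Finsupp.add_apply, he, expVec_apply] at this
    grind [diagGaps]
  · rintro ⟨⟨i, b⟩, hq, he⟩
    exact ⟨_, isDiagSeq_update hc0 hc hq, tauGt_expVec_update hq, expVec_update_le he⟩

end DiagSeq

theorem stmt_1_general (K : Type*) [Field K] (m k l : ℕ)
    (hk : 1 ≤ k)
    (c : ℕ → ℕ) (hc0 : c 0 = k - 1) (hc : IsDiagSeq m k l c) :
    Submodule.colon
      (Ideal.span {g : MvPolynomial (ℕ × ℕ) K |
        ∃ a, IsDiagSeq m k l a ∧ tauGt (expVec m a) (expVec m c) ∧ g = diagMon K m a})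
      (Ideal.span {diagMon K m c}) =
    Ideal.span {P : MvPolynomial (ℕ × ℕ) K |
        ∃ i b : ℕ, 1 ≤ i ∧ i ≤ m ∧ c (i - 1) < b ∧ b < c i ∧ P = MvPolynomial.X (i, b)} ∧
    ∃ V : Set (ℕ × ℕ),
      Submodule.colon
        (Ideal.span {g : MvPolynomial (ℕ × ℕ) K |
          ∃ a, IsDiagSeq m k l a ∧ tauGt (expVec m a) (expVec m c) ∧ g = diagMon K m a})
        (Ideal.span {diagMon K m c}) =
      Ideal.span (MvPolynomial.X '' V) := by
  have hgens : {g : MvPolynomial (ℕ × ℕ) K |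
      ∃ a, IsDiagSeq m k l a ∧ tauGt (expVec m a) (expVec m c) ∧ g = diagMon K m a} =
      (fun s => monomial s 1) ''
        (expVec m '' {a | IsDiagSeq m k l a ∧ tauGt (expVec m a) (expVec m c)}) := by
    ext g
    simp [diagMon_eq_monomial, eq_comm, and_assoc]
  have hvars : {P : MvPolynomial (ℕ × ℕ) K |
      ∃ i b : ℕ, 1 ≤ i ∧ i ≤ m ∧ c (i - 1) < b ∧ b < c i ∧ P = MvPolynomial.X (i, b)} =
      X '' diagGaps m c := by
    ext P
    simp [diagGaps, eq_comm, and_assoc]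
  have hcolon : Submodule.colon
      (Ideal.span {g : MvPolynomial (ℕ × ℕ) K |
        ∃ a, IsDiagSeq m k l a ∧ tauGt (expVec m a) (expVec m c) ∧ g = diagMon K m a})
      (Ideal.span {diagMon K m c}) = Ideal.span (X '' diagGaps m c) := by
    ext f
    rw [hgens, diagMon_eq_monomial, mem_colon_span_monomial_iff, mem_ideal_span_X_image]
    refine forall₂_congr fun e _ => ?_
    simpa [and_assoc] using exists_tauGt_expVec_le_iff hk hc0 hc e
  exact ⟨hvars ▸ hcolon, _, hcolon⟩

/-- For `1 ≤ k < l ≤ n` with `l - k + 1 ≥ m`, let `f₁ > ⋯ > f_r` be all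
diagonal monomials of `Y_{kl}` ordered decreasingly by τ; fix `1 ≤ u ≤ r - 1`, write
`f_{u+1} = X_{1c₁}⋯X_{mc_m}` (so `k ≤ c₁ < ⋯ < c_m ≤ l`) and set `c₀ = k - 1`.  Then
`(⟨f₁,…,f_u⟩ : f_{u+1})` equals the ideal generated by the variables `X_{ib}` with
`1 ≤ i ≤ m`, `c_{i-1} < b < c_i`; in particular it is generated by variables, so
`J_{kl}` has linear quotients with respect to this ordering. -/
theorem stmt_1 (K : Type*) [Field K] (m n k l : ℕ) (hm : 1 ≤ m) (hmn : m ≤ n)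
    (hk : 1 ≤ k) (hkl : k < l) (hln : l ≤ n) (hlen : m ≤ l - k + 1)
    (c : ℕ → ℕ) (hc0 : c 0 = k - 1) (hc : IsDiagSeq m k l c)
    (hu : ∃ a, IsDiagSeq m k l a ∧ tauGt (expVec m a) (expVec m c)) :
    Submodule.colon
      (Ideal.span {g : MvPolynomial (ℕ × ℕ) K |
        ∃ a, IsDiagSeq m k l a ∧ tauGt (expVec m a) (expVec m c) ∧ g = diagMon K m a})
      (Ideal.span {diagMon K m c}) =
    Ideal.span {P : MvPolynomial (ℕ × ℕ) K |
        ∃ i b : ℕ, 1 ≤ i ∧ i ≤ m ∧ c (i - 1) < b ∧ b < c i ∧ P = MvPolynomial.X (i, b)} ∧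
    ∃ V : Set (ℕ × ℕ),
      Submodule.colon
        (Ideal.span {g : MvPolynomial (ℕ × ℕ) K |
          ∃ a, IsDiagSeq m k l a ∧ tauGt (expVec m a) (expVec m c) ∧ g = diagMon K m a})
        (Ideal.span {diagMon K m c}) =
      Ideal.span (MvPolynomial.X '' V) :=
  stmt_1_general K m k l hk c hc0 hc
end

section
/- Let f_v = X_{1a_1}X_{2a_2}⋯X_{ma_m} and f = X_{1c_1}X_{2c_2}⋯X_{mc_m} be diagonal monomials of X with f_v > f with respect to τ. Set a_0 = c_0 = 0 and let j be the minimal index with a_j ≠ c_j. Then a_j < c_j, moreover c_{j−1} < a_j < c_j, and the colon ideal (⟨f_v⟩ : f) is contained in the principal ideal (X_{j a_j}). -/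
open MvPolynomial

/- ### Auxiliary lemmas -/

lemma aux_prod_X {K : Type*} [CommSemiring K] (s : Finset ℕ) (f : ℕ → ℕ × ℕ) :
    (∏ i ∈ s, (MvPolynomial.X (f i) : MvPolynomial (ℕ × ℕ) K)) =
      monomial (∑ i ∈ s, Finsupp.single (f i) 1) 1 := by
  induction s using Finset.cons_induction with
  | empty => simp
  | cons a s h ih =>
    rw [Finset.prod_cons, Finset.sum_cons, ih, X, monomial_mul, one_mul]

lemma diagMon_eq {K : Type*} [Field K] (m : ℕ) (c : ℕ → ℕ) :
    diagMon K m c = monomial (expVec m c) 1 := by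
  rw [diagMon, expVec]; exact aux_prod_X _ _

lemma expVec_self {m j : ℕ} {a : ℕ → ℕ} (hj : j ∈ Finset.Icc 1 m) :
    expVec m a (j, a j) = 1 := by
  rw [expVec, Finsupp.finset_sum_apply]
  rw [Finset.sum_eq_single j]
  · simp
  · intro i hi hij
    have hne : (i, a i) ≠ (j, a j) := fun h => hij (congrArg Prod.fst h)
    rw [Finsupp.single_apply, if_neg hne]
  · intro h; exact absurd hj h

lemma expVec_zero {m : ℕ} {a : ℕ → ℕ} {p : ℕ × ℕ}
    (h : ∀ i ∈ Finset.Icc 1 m, (i, a i) ≠ p) : expVec m a p = 0 := by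
  rw [expVec, Finsupp.finset_sum_apply]
  apply Finset.sum_eq_zero
  intro i hi
  rw [Finsupp.single_apply, if_neg (h i hi)]

lemma diag_mono {m : ℕ} {a : ℕ → ℕ} (hstep : ∀ i, 1 ≤ i → i < m → a i < a (i + 1)) :
    ∀ i' ≤ m, ∀ i, 1 ≤ i → i < i' → a i < a i' := by
  intro i' hi'
  induction i' with
  | zero => omega
  | succ t ih =>
    intro i h1 hlt
    rcases Nat.lt_succ_iff_lt_or_eq.mp hlt with h | h
    · exact (ih (by omega) i h1 h).trans (hstep t (by omega) (by omega))
    · subst h; exact hstep i h1 (by omega)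

lemma X_dvd_iff_coeff {σ R : Type*} [CommSemiring R] {i : σ} {φ : MvPolynomial σ R} :
    MvPolynomial.X i ∣ φ ↔ ∀ d : σ →₀ ℕ, coeff d φ ≠ 0 → d i ≠ 0 := by
  rw [MvPolynomial.X_dvd_iff_modMonomial_eq_zero]
  constructor
  · intro h d hd hdi
    have h2 : ¬ Finsupp.single i 1 ≤ d := by
      simp [Finsupp.single_le_iff, hdi]
    have h3 := MvPolynomial.coeff_modMonomial_of_not_le (s := Finsupp.single i 1) φ h2
    rw [h, coeff_zero] at h3
    exact hd h3.symm
  · intro h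
    ext d
    rw [coeff_zero]
    by_cases hle : Finsupp.single i 1 ≤ d
    · exact MvPolynomial.coeff_modMonomial_of_le φ hle
    · rw [MvPolynomial.coeff_modMonomial_of_not_le φ hle]
      by_contra hne
      exact hle (Finsupp.single_le_iff.mpr (Nat.one_le_iff_ne_zero.mpr (h d hne)))

/-- Let `f_v = X_{1a₁}⋯X_{ma_m}` and `f = X_{1c₁}⋯X_{mc_m}` be diagonal
monomials of `X` with `f_v > f` w.r.t. τ.  Set `a₀ = c₀ = 0` and let `j` be the minimal
index with `a_j ≠ c_j`.  Then `a_j < c_j`, moreover `c_{j-1} < a_j < c_j`, and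
`(⟨f_v⟩ : f) ⊆ (X_{j a_j})`. -/
theorem stmt_3 (K : Type*) [Field K] (m n : ℕ) (hm : 1 ≤ m) (hmn : m ≤ n)
    (a c : ℕ → ℕ) (ha : IsDiagSeq m 1 n a) (hc : IsDiagSeq m 1 n c)
    (ha0 : a 0 = 0) (hc0 : c 0 = 0)
    (hgt : tauGt (expVec m a) (expVec m c))
    (j : ℕ) (hj1 : 1 ≤ j) (hjm : j ≤ m) (hne : a j ≠ c j) (hmin : ∀ i, i < j → a i = c i) :
    a j < c j ∧ c (j - 1) < a j ∧
      Submodule.colon (Ideal.span {diagMon K m a}) (Ideal.span {diagMon K m c}) ≤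
        Ideal.span {MvPolynomial.X (j, a j)} := by
  have hjmem : j ∈ Finset.Icc 1 m := Finset.mem_Icc.mpr ⟨hj1, hjm⟩
  have haj_lt : a j < c j := by
    rcases lt_or_gt_of_ne hne with h | h
    · exact h
    · exfalso
      obtain ⟨p, hp, hq⟩ := hgt
      have hex : ∃ i ∈ Finset.Icc 1 m, (i, a i) = p := by
        by_contra hcon
        push_neg at hcon
        rw [expVec_zero hcon] at hp
        omega
      obtain ⟨i, hi, rfl⟩ := hex
      have hia : expVec m a (i, a i) = 1 := expVec_self hi
      have hij : j ≤ i := by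
        by_contra hlt
        push_neg at hlt
        have hac := hmin i hlt
        have h1 : expVec m c (i, c i) = 1 := expVec_self hi
        rw [← hac] at h1
        omega
      have hq' := hq (j, c j) (by
        rcases Nat.lt_or_ge j i with h' | h'
        · exact Or.inl h'
        · have : i = j := by omega
          subst this
          exact Or.inr ⟨rfl, h⟩)
      have h1 : expVec m c (j, c j) = 1 := expVec_self hjmem
      have h0 : expVec m a (j, c j) = 0 := by
        apply expVec_zero
        intro i' hi' heq
        have e1 : i' = j := congrArg Prod.fst heq
        have e2 : a i' = c j := congrArg Prod.snd heq
        subst e1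
        exact hne e2
      rw [hq'] at h0
      omega
  refine ⟨haj_lt, ?_, ?_⟩
  · rcases Nat.eq_or_lt_of_le hj1 with h | h
    · rw [← h]
      have hc1 : c (1 - 1) = 0 := by simpa using hc0
      have ha1 := ha.2.1
      omega
    · have hj' : a (j - 1) < a j := by
        have := diag_mono ha.1 j hjm (j - 1) (by omega) (by omega)
        exact this
      rw [← hmin (j - 1) (by omega)]
      exact hj'
  · intro g hg
    have hf : diagMon K m c ∈ Ideal.span {diagMon K m c} :=
      Ideal.mem_span_singleton_self _
    have h1 : g * diagMon K m c ∈ Ideal.span {diagMon K m a} := by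
      simpa [smul_eq_mul] using Submodule.mem_colon.mp hg _ hf
    rw [Ideal.mem_span_singleton] at h1
    rw [Ideal.mem_span_singleton]
    have hdvd : MvPolynomial.X (j, a j) ∣ diagMon K m a := by
      rw [diagMon]
      exact Finset.dvd_prod_of_mem _ hjmem
    have h2 : MvPolynomial.X (j, a j) ∣ g * diagMon K m c := hdvd.trans h1
    rw [X_dvd_iff_coeff] at h2 ⊢
    intro d hd
    have hcoeff : coeff (d + expVec m c) (g * diagMon K m c) = coeff d g := by
      rw [diagMon_eq, coeff_mul_monomial, mul_one]
    have h3 := h2 (d + expVec m c) (by rw [hcoeff]; exact hd)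
    have he : expVec m c (j, a j) = 0 := by
      apply expVec_zero
      intro i hi heq
      have e1 : i = j := congrArg Prod.fst heq
      have e2 : c i = a j := congrArg Prod.snd heq
      subst e1
      omega
    simpa [Finsupp.add_apply, he] using h3
end
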